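/- Let a ≤ 0. With ε_f(t) = a∫₀ᵗ e^{a(t-v)} f(v)(1+e^{2av}) dv and τ_{f,g}(t) = (1/2)∫₀ᵗ (2f(s)g(s) + f(s)ε_g(s) + ε_f(s)g(s)) ds, one has for all t ≥ 0: a·τ_{f,1}(t) = (1/2)·ε_f(t) and a·τ_{1,1}(t) = (1/2)(e^{2at} − 1), where 1 denotes the constant function equal to 1. -/

import Mathlib

open MeasureTheory Real

/-- ε_f(t) = a ∫₀ᵗ e^{a(t-v)} f(v)(1+e^{2av}) dv. -/
noncomputable def epsTransform (a : ℝ) (f : ℝ → ℝ) : ℝ → ℝ := fun t =>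
  a * ∫ v in (0:ℝ)..t, Real.exp (a * (t - v)) * f v * (1 + Real.exp (2 * a * v))

/-- τ_{f,g}(t) = (1/2) ∫₀ᵗ (2 f g + f ε_g + ε_f g) ds. -/
noncomputable def tauTransform (a : ℝ) (f g : ℝ → ℝ) : ℝ → ℝ := fun t =>
  (1 / 2) * ∫ s in (0:ℝ)..t,
    (2 * f s * g s + f s * epsTransform a g s + epsTransform a f s * g s)

/-!
`ε_f = a · u` where `u(t) = ∫₀ᵗ e^{a(t-v)} h(v) dv` with `h = f · (1 + e^{2a·})` solves
`u' = a u + h`, `u(0) = 0`; since `u = e^{a·} ∫₀^· e^{-av} h(v) dv` is absolutely continuous,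
this integrates to `∫₀ᵗ (a u + h) = u(t)`. As `ε_1(s) = e^{2as} - 1`, the integrand of `τ_{f,1}`
is exactly `h + ε_f = h + a u`, so `a τ_{f,1}(t) = (a/2) u(t) = ε_f(t)/2`. The identity for
`τ_{1,1}` is the case `f = 1`.
-/

noncomputable def expConvolution (a : ℝ) (h : ℝ → ℝ) (t : ℝ) : ℝ :=
  ∫ v in (0:ℝ)..t, exp (a * (t - v)) * h v

lemma expConvolution_eq_exp_mul (a : ℝ) (h : ℝ → ℝ) (t : ℝ) :
    expConvolution a h t = exp (a * t) * ∫ v in (0:ℝ)..t, exp (-(a * v)) * h v := by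
  rw [expConvolution, ← intervalIntegral.integral_const_mul]
  congr 1 with v
  rw [mul_sub, sub_eq_add_neg, exp_add, mul_assoc]

lemma integral_mul_expConvolution_add {a t : ℝ} {h : ℝ → ℝ}
    (hh : IntervalIntegrable h volume 0 t) :
    ∫ s in (0:ℝ)..t, (a * expConvolution a h s + h s) = expConvolution a h t := by
  have hk : IntervalIntegrable (fun v => exp (-(a * v)) * h v) volume 0 t :=
    hh.continuousOn_mul (by fun_prop)
  have hconv : expConvolution a h =
      fun x => exp (a * x) * ∫ v in (0:ℝ)..x, exp (-(a * v)) * h v :=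
    funext (expConvolution_eq_exp_mul a h)
  have hac : AbsolutelyContinuousOnInterval (expConvolution a h) 0 t := by
    rw [hconv]
    exact (ContDiffOn.absolutelyContinuousOnInterval (by fun_prop)).fun_mul
      (hk.absolutelyContinuousOnInterval_intervalIntegral Set.left_mem_uIcc)
  have hderiv : ∀ᵐ x, x ∈ Set.uIcc 0 t →
      HasDerivAt (expConvolution a h) (a * expConvolution a h x + h x) x := by
    filter_upwards [hk.ae_hasDerivAt_integral] with x hJ hx
    rw [hconv]
    have hexp : HasDerivAt (fun x => exp (a * x)) (exp (a * x) * a) x :=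
      ((hasDerivAt_id x).const_mul a).exp.congr_deriv (by simp)
    refine (hexp.mul (hJ hx 0 Set.left_mem_uIcc)).congr_deriv ?_
    rw [← mul_assoc, ← exp_add, add_neg_cancel, exp_zero]
    ring
  calc ∫ s in (0:ℝ)..t, (a * expConvolution a h s + h s)
      = ∫ s in (0:ℝ)..t, deriv (expConvolution a h) s := by
        refine intervalIntegral.integral_congr_ae ?_
        filter_upwards [hderiv] with x hx hxt
        exact (hx (Set.uIoc_subset_uIcc hxt)).deriv.symm
    _ = expConvolution a h t := by
        rw [hac.integral_deriv_eq_sub, expConvolution_eq_exp_mul a h 0]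
        simp

lemma epsTransform_eq_mul_expConvolution (a : ℝ) (f : ℝ → ℝ) (t : ℝ) :
    epsTransform a f t = a * expConvolution a (fun v => f v * (1 + exp (2 * a * v))) t := by
  simp only [epsTransform, expConvolution, mul_assoc]

lemma epsTransform_const_one (a t : ℝ) :
    epsTransform a (fun _ => 1) t = exp (2 * a * t) - 1 := by
  have hprim : ∀ v ∈ Set.uIcc (0:ℝ) t,
      HasDerivAt (fun v => exp (a * (t + v)) - exp (a * (t - v)))
        (a * (exp (a * (t - v)) * 1 * (1 + exp (2 * a * v)))) v := by
    intro v _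
    have hplus := (((hasDerivAt_id v).const_add t).const_mul a).exp
    have hminus := (((hasDerivAt_id v).const_sub t).const_mul a).exp
    refine (hplus.sub hminus).congr_deriv ?_
    rw [id, show a * (t + v) = a * (t - v) + 2 * a * v by ring, exp_add]
    ring
  rw [epsTransform, ← intervalIntegral.integral_const_mul,
    intervalIntegral.integral_eq_sub_of_hasDerivAt hprim
      (Continuous.intervalIntegrable (by fun_prop) _ _)]
  simp only [add_zero, sub_zero, sub_self, mul_zero, exp_zero]
  ring_nf

lemma mul_tauTransform_const_one {a t : ℝ} {f : ℝ → ℝ} (hf : IntervalIntegrable f volume 0 t) :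
    a * tauTransform a f (fun _ => 1) t = (1 / 2) * epsTransform a f t := by
  set h : ℝ → ℝ := fun v => f v * (1 + exp (2 * a * v))
  have hh : IntervalIntegrable h volume 0 t := hf.mul_continuousOn (by fun_prop)
  calc a * tauTransform a f (fun _ => 1) t
      = (1 / 2) * (a * ∫ s in (0:ℝ)..t, (a * expConvolution a h s + h s)) := by
        rw [tauTransform, mul_left_comm]
        congr 3 with s
        rw [epsTransform_const_one, epsTransform_eq_mul_expConvolution]
        ring
    _ = (1 / 2) * epsTransform a f t := by
        rw [integral_mul_expConvolution_add hh, epsTransform_eq_mul_expConvolution]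

theorem tau_one_identities_general (a : ℝ) (f : ℝ → ℝ)
    (hf : MeasureTheory.LocallyIntegrable f) :
    (∀ t : ℝ, 0 ≤ t →
      a * tauTransform a f (fun _ => 1) t = (1 / 2) * epsTransform a f t) ∧
    (∀ t : ℝ, 0 ≤ t →
      a * tauTransform a (fun _ => 1) (fun _ => 1) t
        = (1 / 2) * (Real.exp (2 * a * t) - 1)) :=
  ⟨fun _ _ => mul_tauTransform_const_one
      (hf.integrableOn_isCompact isCompact_uIcc).intervalIntegrable,
    fun t _ => by rw [mul_tauTransform_const_one intervalIntegrable_const, epsTransform_const_one]⟩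

/-- The identities a·τ_{f,1} = ε_f/2 and a·τ_{1,1}(t) = (e^{2at} − 1)/2. -/
theorem tau_one_identities (a : ℝ) (ha : a ≤ 0) (f : ℝ → ℝ)
    (hf : MeasureTheory.LocallyIntegrable f) :
    (∀ t : ℝ, 0 ≤ t →
      a * tauTransform a f (fun _ => 1) t = (1 / 2) * epsTransform a f t) ∧
    (∀ t : ℝ, 0 ≤ t →
      a * tauTransform a (fun _ => 1) (fun _ => 1) t
        = (1 / 2) * (Real.exp (2 * a * t) - 1)) :=
  tau_one_identities_general a f hf
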